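/- arXiv:1106.4623 — 3 statements merged into one kernel-verified Lean document; each statement's English description precedes it below -/
import Mathlib

section
/- Let D be the differential operator on smooth functions f(θ) defined by (Df)(θ) = cos²θ · f'(θ). For every even positive integer k and smooth f, one has (1/cos^k θ) · d/dθ ( D^k ( f(θ)/cos^k θ ) ) = (d²/dθ² + k²)(d²/dθ² + (k-2)²)···(d²/dθ² + 4) (d/dθ) f(θ). -/
open Real

/-- The operator `D : f ↦ cos²θ · f'`. -/
noncomputable def Dop (f : ℝ → ℝ) : ℝ → ℝ := fun θ => Real.cos θ ^ 2 * deriv f θ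

/-- `evenOp t f = (d²/dθ² + (2t)²) ⋯ (d²/dθ² + 4) (d/dθ) f`,
the composition of the operators `d²/dθ² + m²` over even `m` with `2 ≤ m ≤ 2t`,
applied after one derivative. -/
noncomputable def evenOp : ℕ → (ℝ → ℝ) → (ℝ → ℝ)
  | 0, f => deriv f
  | t + 1, f => fun θ =>
      deriv (deriv (evenOp t f)) θ + ((2 * (t + 1) : ℕ) : ℝ) ^ 2 * evenOp t f θ


def Sset : Set ℝ := {θ | Real.cos θ ≠ 0}

lemma isOpen_Sset : IsOpen Sset := isOpen_compl_singleton.preimage Real.continuous_cos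

lemma mem_nhds_Sset {θ : ℝ} (hθ : Real.cos θ ≠ 0) : Sset ∈ nhds θ := isOpen_Sset.mem_nhds hθ

lemma contDiffOn_iter {u : ℝ → ℝ} (hu : ContDiffOn ℝ (⊤ : ℕ∞) u Sset) (n : ℕ) :
    ContDiffOn ℝ (⊤ : ℕ∞) (Dop^[n] u) Sset := by
  induction n with
  | zero => exact hu
  | succ n ih =>
    rw [Function.iterate_succ_apply']
    exact ((Real.contDiff_cos.pow 2).contDiffOn).mul (ih.deriv_of_isOpen isOpen_Sset (by simp))

lemma hasDerivAt_iter {u : ℝ → ℝ} (hu : ContDiffOn ℝ (⊤ : ℕ∞) u Sset) (n : ℕ) {θ : ℝ}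
    (hθ : Real.cos θ ≠ 0) :
    HasDerivAt (Dop^[n] u) (Dop^[n+1] u θ / Real.cos θ ^ 2) θ := by
  have hd : DifferentiableAt ℝ (Dop^[n] u) θ :=
    ((contDiffOn_iter hu n).contDiffAt (mem_nhds_Sset hθ)).differentiableAt (by simp)
  have h1 : Dop^[n+1] u θ = Real.cos θ ^ 2 * deriv (Dop^[n] u) θ := by
    rw [Function.iterate_succ_apply']; rfl
  have h2 : Dop^[n+1] u θ / Real.cos θ ^ 2 = deriv (Dop^[n] u) θ := by
    rw [h1]; field_simp
  rw [h2]; exact hd.hasDerivAt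

lemma deriv_congr_S {g h : ℝ → ℝ} (he : ∀ x ∈ Sset, g x = h x) {θ : ℝ}
    (hθ : Real.cos θ ≠ 0) : deriv g θ = deriv h θ :=
  Filter.EventuallyEq.deriv_eq (Filter.eventually_of_mem (mem_nhds_Sset hθ) he)

lemma comm1 {u : ℝ → ℝ} (hu : ContDiffOn ℝ (⊤ : ℕ∞) u Sset) {θ : ℝ} (hθ : Real.cos θ ≠ 0) :
    Dop (fun x => u x / Real.cos x ^ 2) θ
      = Dop u θ / Real.cos θ ^ 2 + 2 * (Real.sin θ / Real.cos θ) * u θ := by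
  have Hu : HasDerivAt u (Dop^[1] u θ / Real.cos θ ^ 2) θ := hasDerivAt_iter hu 0 hθ
  have hc : HasDerivAt (fun x => Real.cos x ^ 2) (2 * Real.cos θ ^ (2-1) * (-Real.sin θ)) θ :=
    (Real.hasDerivAt_cos θ).pow 2
  have h := (Hu.div hc (pow_ne_zero 2 hθ)).deriv
  show Real.cos θ ^ 2 * deriv (fun x => u x / Real.cos x ^ 2) θ = _
  rw [show (fun x => u x / Real.cos x ^ 2) = (u / fun x => Real.cos x ^ 2) from rfl, h]
  have h1 : Dop^[1] u θ = Dop u θ := rfl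
  rw [h1]
  field_simp
  ring

lemma commD {u : ℝ → ℝ} (hu : ContDiffOn ℝ (⊤ : ℕ∞) u Sset) : ∀ n : ℕ, ∀ θ : ℝ, Real.cos θ ≠ 0 →
    Dop^[n+2] (fun x => u x / Real.cos x ^ 2) θ
      = Dop^[n+2] u θ / Real.cos θ ^ 2
        + (2 * (n : ℝ) + 4) * (Real.sin θ / Real.cos θ) * Dop^[n+1] u θ
        + ((n : ℝ) + 2) * ((n : ℝ) + 1) * Dop^[n] u θ := by
  intro n
  induction n with
  | zero =>
    intro θ hθ
    have Hu : HasDerivAt u (Dop^[1] u θ / Real.cos θ ^ 2) θ := hasDerivAt_iter hu 0 hθ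
    have H1 : HasDerivAt (Dop^[1] u) (Dop^[2] u θ / Real.cos θ ^ 2) θ := hasDerivAt_iter hu 1 hθ
    have hc : HasDerivAt Real.cos (-Real.sin θ) θ := Real.hasDerivAt_cos θ
    have hs : HasDerivAt Real.sin (Real.cos θ) θ := Real.hasDerivAt_sin θ
    have hc2 : HasDerivAt (fun x => Real.cos x ^ 2) (2 * Real.cos θ ^ (2-1) * (-Real.sin θ)) θ :=
      hc.pow 2
    have hform : HasDerivAt (fun x => Dop u x / Real.cos x ^ 2 + 2 * (Real.sin x / Real.cos x) * u x)
        ((Dop^[2] u θ / Real.cos θ ^ 2 * Real.cos θ ^ 2 - Dop^[1] u θ * (2 * Real.cos θ ^ (2-1) * (-Real.sin θ))) / (Real.cos θ ^ 2) ^ 2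
          + ((2 * ((Real.cos θ * Real.cos θ - Real.sin θ * (-Real.sin θ)) / Real.cos θ ^ 2)) * u θ
              + 2 * (Real.sin θ / Real.cos θ) * (Dop^[1] u θ / Real.cos θ ^ 2))) θ := by
      have hq : HasDerivAt (fun x => Real.sin x / Real.cos x) ((Real.cos θ * Real.cos θ - Real.sin θ * (-Real.sin θ)) / Real.cos θ ^ 2) θ := hs.div hc hθ
      exact (H1.div hc2 (pow_ne_zero 2 hθ)).add ((hq.const_mul 2).mul Hu)
    have key : Dop^[0+2] (fun x => u x / Real.cos x ^ 2) θ
        = Real.cos θ ^ 2 * deriv (Dop^[1] (fun x => u x / Real.cos x ^ 2)) θ := by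
      rw [Function.iterate_succ_apply']; rfl
    rw [key, Function.iterate_one, deriv_congr_S (fun x hx => comm1 hu hx) hθ, hform.deriv]
    have hs2 : Real.sin θ ^ 2 = 1 - Real.cos θ ^ 2 := by
      have := Real.sin_sq_add_cos_sq θ; linarith
    push_cast
    field_simp
    ring_nf
    rw [hs2]; simp only [Function.iterate_one, Function.iterate_zero_apply]; ring
  | succ n ih =>
    intro θ hθ
    have Hn : HasDerivAt (Dop^[n] u) (Dop^[n+1] u θ / Real.cos θ ^ 2) θ := hasDerivAt_iter hu n hθ
    have Hn1 : HasDerivAt (Dop^[n+1] u) (Dop^[n+2] u θ / Real.cos θ ^ 2) θ := hasDerivAt_iter hu (n+1) hθ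
    have Hn2 : HasDerivAt (Dop^[n+2] u) (Dop^[n+3] u θ / Real.cos θ ^ 2) θ := hasDerivAt_iter hu (n+2) hθ
    have hc : HasDerivAt Real.cos (-Real.sin θ) θ := Real.hasDerivAt_cos θ
    have hs : HasDerivAt Real.sin (Real.cos θ) θ := Real.hasDerivAt_sin θ
    have hc2 : HasDerivAt (fun x => Real.cos x ^ 2) (2 * Real.cos θ ^ (2-1) * (-Real.sin θ)) θ :=
      hc.pow 2
    have hq : HasDerivAt (fun x => Real.sin x / Real.cos x)
        ((Real.cos θ * Real.cos θ - Real.sin θ * (-Real.sin θ)) / Real.cos θ ^ 2) θ := hs.div hc hθ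
    have hform : HasDerivAt (fun x => Dop^[n+2] u x / Real.cos x ^ 2
          + (2 * (n : ℝ) + 4) * (Real.sin x / Real.cos x) * Dop^[n+1] u x
          + ((n : ℝ) + 2) * ((n : ℝ) + 1) * Dop^[n] u x)
        ((Dop^[n+3] u θ / Real.cos θ ^ 2 * Real.cos θ ^ 2 - Dop^[n+2] u θ * (2 * Real.cos θ ^ (2-1) * (-Real.sin θ))) / (Real.cos θ ^ 2) ^ 2
          + (((2 * (n : ℝ) + 4) * ((Real.cos θ * Real.cos θ - Real.sin θ * (-Real.sin θ)) / Real.cos θ ^ 2)) * Dop^[n+1] u θ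
              + (2 * (n : ℝ) + 4) * (Real.sin θ / Real.cos θ) * (Dop^[n+2] u θ / Real.cos θ ^ 2))
          + ((n : ℝ) + 2) * ((n : ℝ) + 1) * (Dop^[n+1] u θ / Real.cos θ ^ 2)) θ :=
      ((Hn2.div hc2 (pow_ne_zero 2 hθ)).add ((hq.const_mul _).mul Hn1)).add (Hn.const_mul _)
    have key : Dop^[n+1+2] (fun x => u x / Real.cos x ^ 2) θ
        = Real.cos θ ^ 2 * deriv (Dop^[n+2] (fun x => u x / Real.cos x ^ 2)) θ := by
      rw [show n+1+2 = (n+2)+1 from rfl, Function.iterate_succ_apply']; rfl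
    rw [key, deriv_congr_S (fun x hx => ih x hx) hθ, hform.deriv]
    have hs2 : Real.sin θ ^ 2 = 1 - Real.cos θ ^ 2 := by
      have := Real.sin_sq_add_cos_sq θ; linarith
    have e3 : Dop^[n+1+2] u θ = Dop^[n+3] u θ := rfl
    have e2 : Dop^[n+1+1] u θ = Dop^[n+2] u θ := rfl
    rw [e3, e2]
    push_cast
    field_simp
    ring_nf
    rw [hs2]; ring

-- evenOp is defined below in mainL context

lemma mainL (f : ℝ → ℝ) (hf : ContDiff ℝ (⊤ : ℕ∞) f) : ∀ t : ℕ, ∀ θ : ℝ, Real.cos θ ≠ 0 →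
    (1 / Real.cos θ ^ (2*t)) * deriv (Dop^[2*t] (fun x => f x / Real.cos x ^ (2*t))) θ
      = evenOp t f θ := by
  intro t
  induction t with
  | zero =>
    intro θ hθ
    have h0 : (fun x => f x / Real.cos x ^ (2*0)) = f := funext fun x => by simp
    simp [h0, evenOp]
  | succ t ih =>
    intro θ hθ
    have hu : ContDiffOn ℝ (⊤ : ℕ∞) (fun x => f x / Real.cos x ^ (2*t)) Sset :=
      hf.contDiffOn.div ((Real.contDiff_cos.pow (2*t)).contDiffOn)
        (fun x hx => pow_ne_zero _ hx)
    set u : ℝ → ℝ := fun x => f x / Real.cos x ^ (2*t) with hudef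
    have hs2 : Real.sin θ ^ 2 = 1 - Real.cos θ ^ 2 := by
      have := Real.sin_sq_add_cos_sq θ; linarith
    have hc : HasDerivAt Real.cos (-Real.sin θ) θ := Real.hasDerivAt_cos θ
    have hs : HasDerivAt Real.sin (Real.cos θ) θ := Real.hasDerivAt_sin θ
    -- transfer
    have htrans : (fun x => f x / Real.cos x ^ (2*(t+1))) = fun x => u x / Real.cos x ^ 2 :=
      funext fun x => by
        rw [hudef]
        show f x / Real.cos x ^ (2*(t+1)) = (f x / Real.cos x ^ (2*t)) / Real.cos x ^ 2
        rw [show 2*(t+1) = 2*t + 2 from by ring, pow_add, ← div_div]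
    have hit : 2*(t+1) = (2*t) + 2 := by ring
    -- the function evenOp t f agrees with Lf on Sset
    have hL : ∀ x, Real.cos x ≠ 0 →
        evenOp t f x = Dop^[2*t+1] u x / Real.cos x ^ (2*t+2) := by
      intro x hx
      rw [← ih x hx, (hasDerivAt_iter hu (2*t) hx).deriv]
      rw [pow_add]
      field_simp
    -- deriv of evenOp t f agrees with Mf on Sset
    have hM : ∀ x, Real.cos x ≠ 0 →
        deriv (evenOp t f) x = Dop^[2*t+2] u x / Real.cos x ^ (2*t+4)
          + ((2*t : ℕ) + 2 : ℝ) * Real.sin x * Dop^[2*t+1] u x / Real.cos x ^ (2*t+3) := by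
      intro x hx
      rw [deriv_congr_S (fun y hy => hL y hy) hx]
      have hcx : HasDerivAt Real.cos (-Real.sin x) x := Real.hasDerivAt_cos x
      have hLf : HasDerivAt (fun y => Dop^[2*t+1] u y / Real.cos y ^ (2*t+2))
          ((Dop^[2*t+2] u x / Real.cos x ^ 2 * Real.cos x ^ (2*t+2)
            - Dop^[2*t+1] u x * (((2*t+2 : ℕ)) * Real.cos x ^ (2*t+2-1) * (-Real.sin x)))
            / (Real.cos x ^ (2*t+2)) ^ 2) x :=
        (hasDerivAt_iter hu (2*t+1) hx).div (hcx.pow (2*t+2)) (pow_ne_zero _ hx)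
      rw [hLf.deriv, show 2*t+2-1 = 2*t+1 from rfl]
      have hsx2 : Real.sin x ^ 2 = 1 - Real.cos x ^ 2 := by
        have := Real.sin_sq_add_cos_sq x; linarith
      push_cast
      field_simp
      ring
    -- second derivative of evenOp t f at θ
    have hM2 : deriv (deriv (evenOp t f)) θ
        = (Dop^[2*t+3] u θ / Real.cos θ ^ 2 * Real.cos θ ^ (2*t+4)
            - Dop^[2*t+2] u θ * (((2*t+4 : ℕ)) * Real.cos θ ^ (2*t+4-1) * (-Real.sin θ)))
            / (Real.cos θ ^ (2*t+4)) ^ 2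
          + ((((2*t : ℕ) + 2 : ℝ) * Real.cos θ * Dop^[2*t+1] u θ
              + ((2*t : ℕ) + 2 : ℝ) * Real.sin θ * (Dop^[2*t+2] u θ / Real.cos θ ^ 2))
              * Real.cos θ ^ (2*t+3)
            - ((2*t : ℕ) + 2 : ℝ) * Real.sin θ * Dop^[2*t+1] u θ
              * (((2*t+3 : ℕ)) * Real.cos θ ^ (2*t+3-1) * (-Real.sin θ)))
            / (Real.cos θ ^ (2*t+3)) ^ 2 := by
      rw [deriv_congr_S (fun y hy => hM y hy) hθ]
      have h1 : HasDerivAt (fun y => Dop^[2*t+2] u y / Real.cos y ^ (2*t+4))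
          ((Dop^[2*t+3] u θ / Real.cos θ ^ 2 * Real.cos θ ^ (2*t+4)
            - Dop^[2*t+2] u θ * (((2*t+4 : ℕ)) * Real.cos θ ^ (2*t+4-1) * (-Real.sin θ)))
            / (Real.cos θ ^ (2*t+4)) ^ 2) θ :=
        (hasDerivAt_iter hu (2*t+2) hθ).div (hc.pow (2*t+4)) (pow_ne_zero _ hθ)
      have h2 : HasDerivAt (fun y => ((2*t : ℕ) + 2 : ℝ) * Real.sin y * Dop^[2*t+1] u y / Real.cos y ^ (2*t+3))
          (((((2*t : ℕ) + 2 : ℝ) * Real.cos θ * Dop^[2*t+1] u θ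
              + ((2*t : ℕ) + 2 : ℝ) * Real.sin θ * (Dop^[2*t+2] u θ / Real.cos θ ^ 2))
              * Real.cos θ ^ (2*t+3)
            - ((2*t : ℕ) + 2 : ℝ) * Real.sin θ * Dop^[2*t+1] u θ
              * (((2*t+3 : ℕ)) * Real.cos θ ^ (2*t+3-1) * (-Real.sin θ)))
            / (Real.cos θ ^ (2*t+3)) ^ 2) θ :=
        (((hs.const_mul _).mul (hasDerivAt_iter hu (2*t+1) hθ)).div (hc.pow (2*t+3))
          (pow_ne_zero _ hθ))
      exact (h1.add h2).deriv
    -- compute LHS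
    have hq : HasDerivAt (fun x => Real.sin x / Real.cos x)
        ((Real.cos θ * Real.cos θ - Real.sin θ * (-Real.sin θ)) / Real.cos θ ^ 2) θ := hs.div hc hθ
    have hG : HasDerivAt (fun x => Dop^[2*t+2] u x / Real.cos x ^ 2
          + (2 * ((2*t : ℕ) : ℝ) + 4) * (Real.sin x / Real.cos x) * Dop^[2*t+1] u x
          + (((2*t : ℕ) : ℝ) + 2) * (((2*t : ℕ) : ℝ) + 1) * Dop^[2*t] u x)
        ((Dop^[2*t+3] u θ / Real.cos θ ^ 2 * Real.cos θ ^ 2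
            - Dop^[2*t+2] u θ * (2 * Real.cos θ ^ (2-1) * (-Real.sin θ))) / (Real.cos θ ^ 2) ^ 2
          + (((2 * ((2*t : ℕ) : ℝ) + 4) * ((Real.cos θ * Real.cos θ - Real.sin θ * (-Real.sin θ)) / Real.cos θ ^ 2)) * Dop^[2*t+1] u θ
              + (2 * ((2*t : ℕ) : ℝ) + 4) * (Real.sin θ / Real.cos θ) * (Dop^[2*t+2] u θ / Real.cos θ ^ 2))
          + (((2*t : ℕ) : ℝ) + 2) * (((2*t : ℕ) : ℝ) + 1) * (Dop^[2*t+1] u θ / Real.cos θ ^ 2)) θ :=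
      (((hasDerivAt_iter hu (2*t+2) hθ).div (hc.pow 2) (pow_ne_zero 2 hθ)).add
        ((hq.const_mul _).mul (hasDerivAt_iter hu (2*t+1) hθ))).add
        ((hasDerivAt_iter hu (2*t) hθ).const_mul _)
    have hLHS : deriv (Dop^[2*(t+1)] (fun x => f x / Real.cos x ^ (2*(t+1)))) θ
        = (Dop^[2*t+3] u θ / Real.cos θ ^ 2 * Real.cos θ ^ 2
            - Dop^[2*t+2] u θ * (2 * Real.cos θ ^ (2-1) * (-Real.sin θ))) / (Real.cos θ ^ 2) ^ 2
          + (((2 * ((2*t : ℕ) : ℝ) + 4) * ((Real.cos θ * Real.cos θ - Real.sin θ * (-Real.sin θ)) / Real.cos θ ^ 2)) * Dop^[2*t+1] u θ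
              + (2 * ((2*t : ℕ) : ℝ) + 4) * (Real.sin θ / Real.cos θ) * (Dop^[2*t+2] u θ / Real.cos θ ^ 2))
          + (((2*t : ℕ) : ℝ) + 2) * (((2*t : ℕ) : ℝ) + 1) * (Dop^[2*t+1] u θ / Real.cos θ ^ 2) := by
      rw [htrans, hit]
      rw [deriv_congr_S (fun y hy => commD hu (2*t) y hy) hθ]
      exact hG.deriv
    -- put everything together
    show (1 / Real.cos θ ^ (2*(t+1))) * deriv (Dop^[2*(t+1)] (fun x => f x / Real.cos x ^ (2*(t+1)))) θ
      = deriv (deriv (evenOp t f)) θ + ((2 * (t + 1) : ℕ) : ℝ) ^ 2 * evenOp t f θ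
    rw [hLHS, hM2, hL θ hθ, hit]
    rw [show 2*t+4-1 = 2*t+3 from rfl, show 2*t+3-1 = 2*t+2 from rfl]
    push_cast
    field_simp
    ring_nf
    rw [hs2]
    ring

/-- For every even positive `k = 2t` and every smooth `f`, on `(-π/2, π/2)` one has
`(1/cos^k θ) · d/dθ (D^k (f/cos^k)) = (d²/dθ²+k²)⋯(d²/dθ²+4)(d/dθ) f`. -/
theorem evenCaseLemma (k t : ℕ) (hk : k = 2 * t) (hkpos : 0 < k)
    (f : ℝ → ℝ) (hf : ContDiff ℝ (⊤ : ℕ∞) f)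
    (θ : ℝ) (hθ : θ ∈ Set.Ioo (-(π / 2)) (π / 2)) :
    (1 / Real.cos θ ^ k) * deriv (Dop^[k] (fun x => f x / Real.cos x ^ k)) θ
      = evenOp t f θ := by
  have hne : Real.cos θ ≠ 0 := (Real.cos_pos_of_mem_Ioo hθ).ne'
  subst hk
  exact mainL f hf t θ hne
end

section
/- Define operators D_{k+1} f = (1/cos^k θ) · d/dθ ( D^k ( f/cos^k θ ) ) where Df = cos²θ · f'. Then for every k ≥ 0, D_{k+3} = (d/dθ − (k+2)tan θ) ∘ D_{k+1} ∘ (d/dθ + (k+2)tan θ) as operators on smooth functions on (-π/2, π/2). -/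
open Real

/-- `Dk k f = D_{k+1} f = (1/cos^k θ) · d/dθ ( D^k ( f/cos^k θ ) )`. -/
noncomputable def Dk (k : ℕ) (f : ℝ → ℝ) : ℝ → ℝ := fun θ =>
  (1 / Real.cos θ ^ k) * deriv (Dop^[k] (fun x => f x / Real.cos x ^ k)) θ

lemma Dop_iter_eqOn {s : Set ℝ} (hs : IsOpen s) {f g : ℝ → ℝ} (h : Set.EqOn f g s) :
    ∀ n : ℕ, Set.EqOn (Dop^[n] f) (Dop^[n] g) s := by
  intro n
  induction n with
  | zero => simpa
  | succ n ih =>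
    intro x hx
    rw [Function.iterate_succ_apply', Function.iterate_succ_apply']
    unfold Dop
    congr 1
    exact Filter.EventuallyEq.deriv_eq (Filter.eventuallyEq_of_mem (hs.mem_nhds hx) ih)

lemma Dop_iter_contDiffOn {s : Set ℝ} (hs : IsOpen s) {f : ℝ → ℝ}
    (hf : ContDiffOn ℝ (⊤ : ℕ∞) f s) : ∀ n : ℕ, ContDiffOn ℝ (⊤ : ℕ∞) (Dop^[n] f) s := by
  intro n
  induction n with
  | zero => simpa
  | succ n ih =>
    rw [Function.iterate_succ_apply']
    exact ((Real.contDiff_cos.pow 2).contDiffOn).mul (ih.deriv_of_isOpen hs (by simp))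

lemma final_arith (k : ℕ) (a b c s : ℝ) (hc : c ≠ 0) :
    1 / c ^ (k + 2) * (2 * c ^ 1 * (-s) * a + c ^ 2 * b)
      = ((0 * c ^ k - 1 * ((k : ℝ) * c ^ (k - 1) * (-s))) / (c ^ k) ^ 2 * a
            + 1 / c ^ k * b)
          - ((k : ℝ) + 2) * (s / c) * (1 / c ^ k * a) := by
  cases k with
  | zero => field_simp; ring
  | succ m =>
    rw [Nat.add_sub_cancel]
    have h1 : c ^ (m + 1) ≠ 0 := pow_ne_zero _ hc
    have h2 : c ^ (m + 3) ≠ 0 := pow_ne_zero _ hc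
    field_simp
    ring

/-- `D_{k+3} = (d/dθ − (k+2)tan θ) ∘ D_{k+1} ∘ (d/dθ + (k+2)tan θ)` on smooth
functions on `(-π/2, π/2)`. -/
theorem bgg_factorization (k : ℕ) (f : ℝ → ℝ) (hf : ContDiff ℝ (⊤ : ℕ∞) f)
    (θ : ℝ) (hθ : θ ∈ Set.Ioo (-(π / 2)) (π / 2)) :
    Dk (k + 2) f θ
      = deriv (Dk k (fun y => deriv f y + ((k : ℝ) + 2) * Real.tan y * f y)) θ
          - ((k : ℝ) + 2) * Real.tan θ
            * Dk k (fun y => deriv f y + ((k : ℝ) + 2) * Real.tan y * f y) θ := by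
  have hSopen : IsOpen (Set.Ioo (-(π / 2)) (π / 2)) := isOpen_Ioo
  have hcos : ∀ x ∈ Set.Ioo (-(π / 2)) (π / 2), Real.cos x ≠ 0 :=
    fun x hx => (Real.cos_pos_of_mem_Ioo hx).ne'
  have hcθ : Real.cos θ ≠ 0 := hcos θ hθ
  set g : ℝ → ℝ := fun y => deriv f y + ((k : ℝ) + 2) * Real.tan y * f y with hg
  set F : ℝ → ℝ := fun x => f x / Real.cos x ^ (k + 2) with hF
  have hFsm : ContDiffOn ℝ (⊤ : ℕ∞) F (Set.Ioo (-(π / 2)) (π / 2)) := by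
    apply ContDiffOn.div hf.contDiffOn ((Real.contDiff_cos.pow (k + 2)).contDiffOn)
    intro x hx; exact pow_ne_zero _ (hcos x hx)
  -- Step 1: `g / cos^k = Dop F` on the interval
  have hstep1 : Set.EqOn (fun x => g x / Real.cos x ^ k) (Dop F)
      (Set.Ioo (-(π / 2)) (π / 2)) := by
    intro x hx
    have hcx := hcos x hx
    have hdf : HasDerivAt f (deriv f x) x := (hf.differentiable (by simp) x).hasDerivAt
    have hdF : HasDerivAt F
        ((deriv f x * Real.cos x ^ (k + 2)
            - f x * ((↑(k + 2) : ℝ) * Real.cos x ^ (k + 2 - 1) * (-Real.sin x)))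
          / (Real.cos x ^ (k + 2)) ^ 2) x :=
      hdf.div ((Real.hasDerivAt_cos x).pow (k + 2)) (pow_ne_zero _ hcx)
    have hdF' := hdF.deriv
    rw [show k + 2 - 1 = k + 1 by omega] at hdF'
    simp only [hg, Dop, hdF', Real.tan_eq_sin_div_cos, Nat.add_sub_cancel]
    have h1 : Real.cos x ^ (k + 2) ≠ 0 := pow_ne_zero _ hcx
    have h2 : Real.cos x ^ k ≠ 0 := pow_ne_zero _ hcx
    have h3 : Real.cos x ^ (k + 1) ≠ 0 := pow_ne_zero _ hcx
    field_simp
    push_cast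
    ring
  set u : ℝ → ℝ := Dop^[k + 1] F with hu
  have husm : ContDiffOn ℝ (⊤ : ℕ∞) u (Set.Ioo (-(π / 2)) (π / 2)) :=
    Dop_iter_contDiffOn hSopen hFsm (k + 1)
  have hu1sm : ContDiffOn ℝ (⊤ : ℕ∞) (deriv u) (Set.Ioo (-(π / 2)) (π / 2)) :=
    husm.deriv_of_isOpen hSopen (by simp)
  have hdu1 : DifferentiableAt ℝ (deriv u) θ :=
    (hu1sm.contDiffAt (hSopen.mem_nhds hθ)).differentiableAt (by simp)
  -- Step 2: `Dop^[k] (g / cos^k) = u` on the interval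
  have hstep2 : Set.EqOn (Dop^[k] (fun x => g x / Real.cos x ^ k)) u
      (Set.Ioo (-(π / 2)) (π / 2)) := by
    have h := Dop_iter_eqOn hSopen hstep1 k
    rw [hu, Function.iterate_succ_apply]
    exact h
  -- `Dk k g` agrees with `1/cos^k * deriv u` on the interval
  have hDkg : Set.EqOn (Dk k g) (fun x => 1 / Real.cos x ^ k * deriv u x)
      (Set.Ioo (-(π / 2)) (π / 2)) := by
    intro x hx
    simp only [Dk]
    congr 1
    exact Filter.EventuallyEq.deriv_eq
      (Filter.eventuallyEq_of_mem (hSopen.mem_nhds hx) hstep2)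
  have hRd : deriv (Dk k g) θ = deriv (fun x => 1 / Real.cos x ^ k * deriv u x) θ :=
    Filter.EventuallyEq.deriv_eq (Filter.eventuallyEq_of_mem (hSopen.mem_nhds hθ) hDkg)
  have hc1 : HasDerivAt (fun x => 1 / Real.cos x ^ k)
      ((0 * Real.cos θ ^ k - 1 * ((k : ℝ) * Real.cos θ ^ (k - 1) * (-Real.sin θ)))
        / (Real.cos θ ^ k) ^ 2) θ :=
    (hasDerivAt_const θ (1 : ℝ)).div ((Real.hasDerivAt_cos θ).pow k) (pow_ne_zero _ hcθ)
  have hv : deriv (fun x => 1 / Real.cos x ^ k * deriv u x) θ =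
      (0 * Real.cos θ ^ k - 1 * ((k : ℝ) * Real.cos θ ^ (k - 1) * (-Real.sin θ)))
          / (Real.cos θ ^ k) ^ 2 * deriv u θ
        + 1 / Real.cos θ ^ k * deriv (deriv u) θ :=
    (hc1.mul hdu1.hasDerivAt).deriv
  -- LHS
  have hL1 : Dop^[k + 2] F = Dop u := by
    rw [hu, ← Function.iterate_succ_apply' Dop (k + 1)]
  have hLd : deriv (Dop u) θ =
      2 * Real.cos θ ^ 1 * (-Real.sin θ) * deriv u θ
        + Real.cos θ ^ 2 * deriv (deriv u) θ := by
    have h2 : HasDerivAt (fun x => Real.cos x ^ 2)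
        ((2 : ℝ) * Real.cos θ ^ 1 * (-Real.sin θ)) θ := by
      simpa using (Real.hasDerivAt_cos θ).fun_pow 2
    exact (h2.mul hdu1.hasDerivAt).deriv
  simp only [Dk, ← hg, ← hF]
  rw [hL1, hLd]
  have hDkgθ : (1 / Real.cos θ ^ k)
        * deriv (Dop^[k] fun x => g x / Real.cos x ^ k) θ
      = 1 / Real.cos θ ^ k * deriv u θ := hDkg hθ
  rw [hDkgθ]
  rw [hRd, hv, Real.tan_eq_sin_div_cos]
  have := final_arith k (deriv u θ) (deriv (deriv u) θ) (Real.cos θ) (Real.sin θ) hcθ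
  linarith [this]
end

section
/- Let ∇ = d/dθ and Υ be multiplication by tan θ on smooth functions on (-π/2, π/2). For every even k ≥ 2, the composition (∇ − kΥ)(∇ − (k−2)Υ)···(∇ + (k−2)Υ)(∇ + kΥ) over all even integers j from −k to k (factors (∇ + jΥ)) equals (∇² + k²)(∇² + (k−2)²)···(∇² + 4)∇ as operators. -/
open Real

/-- The factor `∇ + jΥ : g ↦ g' + j tan θ · g`. -/
noncomputable def factorOp (j : ℤ) (g : ℝ → ℝ) : ℝ → ℝ := fun θ =>
  deriv g θ + (j : ℝ) * Real.tan θ * g θ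

/-- The composition `∏ (∇ + jΥ)` over the entries of `l`, the head of the list
being the outermost factor. -/
noncomputable def prodFactorOp (l : List ℤ) (f : ℝ → ℝ) : ℝ → ℝ := l.foldr factorOp f

namespace EvenProd

/-- The set where `cos ≠ 0`. -/
def S : Set ℝ := {x | Real.cos x ≠ 0}

lemma isOpen_S : IsOpen S := by
  have : S = Real.cos ⁻¹' ({0}ᶜ) := rfl
  rw [this]
  exact IsOpen.preimage Real.continuous_cos isOpen_compl_singleton

lemma mem_S {x : ℝ} (hx : x ∈ S) : Real.cos x ≠ 0 := hx

/-- Functions smooth on `S`. -/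
def Sm (g : ℝ → ℝ) : Prop := ∀ (n : ℕ), ∀ x ∈ S, ContDiffAt ℝ n g x

lemma Sm.differentiableAt {g : ℝ → ℝ} (h : Sm g) {x : ℝ} (hx : x ∈ S) :
    DifferentiableAt ℝ g x :=
  (h 1 x hx).differentiableAt one_ne_zero

lemma Sm.hasDerivAt {g : ℝ → ℝ} (h : Sm g) {x : ℝ} (hx : x ∈ S) :
    HasDerivAt g (_root_.deriv g x) x := (h.differentiableAt hx).hasDerivAt

lemma Sm.deriv {g : ℝ → ℝ} (h : Sm g) : Sm (_root_.deriv g) := by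
  intro n x hx
  obtain ⟨u, hu, hcd⟩ := (h (n + 1) x hx).contDiffOn le_rfl (by simp)
  obtain ⟨v, hvu, hv, hxv⟩ := mem_nhds_iff.1 hu
  have hres : ContDiffOn ℝ n (_root_.deriv g) v := by
    refine (hcd.mono hvu).deriv_of_isOpen hv ?_
    push_cast
    exact le_rfl
  exact hres.contDiffAt (hv.mem_nhds hxv)

lemma Sm.add {a b : ℝ → ℝ} (ha : Sm a) (hb : Sm b) : Sm (fun y => a y + b y) :=
  fun n x hx => (ha n x hx).add (hb n x hx)

lemma Sm.const_mul {a : ℝ → ℝ} (ha : Sm a) (c : ℝ) : Sm (fun y => c * a y) :=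
  fun n x hx => contDiffAt_const.mul (ha n x hx)

lemma Sm.tanMul {a : ℝ → ℝ} (ha : Sm a) : Sm (fun y => Real.tan y * a y) :=
  fun n x hx => (Real.contDiffAt_tan.2 hx).mul (ha n x hx)

lemma Sm.evenOp {f : ℝ → ℝ} (hf : Sm f) (t : ℕ) : Sm (evenOp t f) := by
  induction t with
  | zero => exact hf.deriv
  | succ t ih =>
      have : _root_.evenOp (t + 1) f
          = fun y => _root_.deriv (_root_.deriv (_root_.evenOp t f)) y
            + ((2 * (t + 1) : ℕ) : ℝ) ^ 2 * _root_.evenOp t f y := rfl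
      rw [this]
      exact (ih.deriv.deriv).add (ih.const_mul _)

lemma Sm.factorOp {f : ℝ → ℝ} (hf : Sm f) (j : ℤ) : Sm (factorOp j f) := by
  intro n x hx
  exact (hf.deriv n x hx).add
    ((contDiffAt_const.mul (Real.contDiffAt_tan.2 hx)).mul (hf n x hx))

lemma derivS_congr {a b : ℝ → ℝ} (h : ∀ y ∈ S, a y = b y) {x : ℝ} (hx : x ∈ S) :
    deriv a x = deriv b x :=
  Filter.EventuallyEq.deriv_eq (Filter.eventuallyEq_of_mem (isOpen_S.mem_nhds hx) h)

lemma hasDerivAt_tan' {x : ℝ} (hx : x ∈ S) :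
    HasDerivAt Real.tan (1 + Real.tan x ^ 2) x := by
  have h := Real.hasDerivAt_tan (mem_S hx)
  convert h using 1
  have hc : Real.cos x ≠ 0 := mem_S hx
  rw [Real.tan_eq_sin_div_cos]
  field_simp
  exact Real.cos_sq_add_sin_sq x

lemma hasDerivAt_W {x : ℝ} (hx : x ∈ S) :
    HasDerivAt (fun y => 1 + Real.tan y ^ 2) (2 * Real.tan x * (1 + Real.tan x ^ 2)) x := by
  have h := ((hasDerivAt_tan' hx).fun_pow 2).const_add (1 : ℝ)
  exact h.congr_deriv (by ring)

/-- The multiplication-by-`tan` operator. -/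
noncomputable def Tm (g : ℝ → ℝ) : ℝ → ℝ := fun θ => Real.tan θ * g θ

lemma Sm.tm {f : ℝ → ℝ} (hf : Sm f) : Sm (Tm f) := hf.tanMul

/-- `Xf t f = evenOp t (tan · f) - tan · evenOp t f`. -/
noncomputable def Xf (t : ℕ) (f : ℝ → ℝ) : ℝ → ℝ := fun θ =>
  evenOp t (Tm f) θ - Real.tan θ * evenOp t f θ

lemma Sm.xf {f : ℝ → ℝ} (hf : Sm f) (t : ℕ) : Sm (Xf t f) := by
  intro n x hx
  exact ((hf.tm.evenOp t) n x hx).sub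
    ((Real.contDiffAt_tan.2 hx).mul ((hf.evenOp t) n x hx))

lemma evenOp_succ_apply (t : ℕ) (f : ℝ → ℝ) (x : ℝ) :
    evenOp (t + 1) f x = deriv (deriv (evenOp t f)) x
      + ((2 * (t + 1) : ℕ) : ℝ) ^ 2 * evenOp t f x := rfl

/-- Linearity of `evenOp` on `S`. -/
lemma evenOp_lin (t : ℕ) {a b : ℝ → ℝ} (ha : Sm a) (hb : Sm b) (c : ℝ) :
    ∀ x ∈ S, evenOp t (fun θ => a θ + c * b θ) x = evenOp t a x + c * evenOp t b x := by
  induction t with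
  | zero =>
      intro x hx
      show deriv (fun θ => a θ + c * b θ) x = deriv a x + c * deriv b x
      rw [deriv_fun_add (ha.differentiableAt hx) ((hb.differentiableAt hx).const_mul c),
        deriv_const_mul c (hb.differentiableAt hx)]
  | succ t ih =>
      intro x hx
      have h1 : ∀ y ∈ S, deriv (evenOp t (fun θ => a θ + c * b θ)) y
          = deriv (evenOp t a) y + c * deriv (evenOp t b) y := by
        intro y hy
        have e := derivS_congr ih hy
        rw [e, deriv_fun_add ((ha.evenOp t).differentiableAt hy)
            (((hb.evenOp t).differentiableAt hy).const_mul c),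
          deriv_const_mul c ((hb.evenOp t).differentiableAt hy)]
      have h2 : deriv (deriv (evenOp t (fun θ => a θ + c * b θ))) x
          = deriv (deriv (evenOp t a)) x + c * deriv (deriv (evenOp t b)) x := by
        have e := derivS_congr h1 hx
        rw [e, deriv_fun_add (((ha.evenOp t).deriv).differentiableAt hx)
            ((((hb.evenOp t).deriv).differentiableAt hx).const_mul c),
          deriv_const_mul c (((hb.evenOp t).deriv).differentiableAt hx)]
      rw [evenOp_succ_apply, evenOp_succ_apply, evenOp_succ_apply, h2, ih x hx]
      ring

/-- `evenOp` commutes with `deriv` on `S`. -/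
lemma evenOp_deriv_comm (t : ℕ) {a : ℝ → ℝ} (ha : Sm a) :
    ∀ x ∈ S, evenOp t (deriv a) x = deriv (evenOp t a) x := by
  induction t with
  | zero => intro x _; rfl
  | succ t ih =>
      intro x hx
      have h1 : ∀ y ∈ S, deriv (evenOp t (deriv a)) y
          = deriv (deriv (evenOp t a)) y := fun y hy => derivS_congr ih hy
      have h2 : deriv (deriv (evenOp t (deriv a))) x
          = deriv (deriv (deriv (evenOp t a))) x := derivS_congr h1 hx
      have h3 : evenOp (t + 1) a = fun y => deriv (deriv (evenOp t a)) y
          + ((2 * (t + 1) : ℕ) : ℝ) ^ 2 * evenOp t a y := rfl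
      rw [evenOp_succ_apply, h2, ih x hx, h3,
        deriv_fun_add ((((ha.evenOp t).deriv).deriv).differentiableAt hx)
          (((ha.evenOp t).differentiableAt hx).const_mul _),
        deriv_const_mul _ ((ha.evenOp t).differentiableAt hx)]

/-- The key lemma (★): the derivative of `Xf t f` on `S`. -/
lemma star (t : ℕ) : ∀ (f : ℝ → ℝ), Sm f → ∀ x ∈ S,
    deriv (Xf t f) x = (2 * (t : ℝ) + 2) * Real.tan x * Xf t f x
      + (2 * (t : ℝ) + 1) * (1 + Real.tan x ^ 2) * evenOp t f x := by
  induction t with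
  | zero =>
      intro f hf x hx
      have h0 : ∀ y ∈ S, Xf 0 f y = f y + Real.tan y * (Real.tan y * f y) := by
        intro y hy
        show deriv (fun θ => Real.tan θ * f θ) y - Real.tan y * deriv f y = _
        rw [((hasDerivAt_tan' hy).fun_mul (hf.hasDerivAt hy)).deriv]
        ring
      have hx0 : Xf 0 f x = (1 + Real.tan x ^ 2) * f x := by rw [h0 x hx]; ring
      have hD : deriv (Xf 0 f) x
          = deriv f x + ((1 + Real.tan x ^ 2) * (Real.tan x * f x)
            + Real.tan x * ((1 + Real.tan x ^ 2) * f x + Real.tan x * deriv f x)) := by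
        have e := derivS_congr h0 hx
        rw [e]
        have H : HasDerivAt (fun y => f y + Real.tan y * (Real.tan y * f y))
            (deriv f x + ((1 + Real.tan x ^ 2) * (Real.tan x * f x)
              + Real.tan x * ((1 + Real.tan x ^ 2) * f x + Real.tan x * deriv f x))) x :=
          (hf.hasDerivAt hx).add
            ((hasDerivAt_tan' hx).mul ((hasDerivAt_tan' hx).mul (hf.hasDerivAt hx)))
        exact H.deriv
      have he0 : evenOp 0 f x = deriv f x := rfl
      rw [hD, hx0, he0]
      push_cast
      ring
  | succ t ih =>
      intro f hf x hx
      have hu : Sm (evenOp t f) := hf.evenOp t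
      have hv : Sm (Xf t f) := hf.xf t
      have E1 : ∀ y ∈ S, deriv (Xf t f) y
          = (2 * (t : ℝ) + 2) * (Real.tan y * Xf t f y)
            + (2 * (t : ℝ) + 1) * ((1 + Real.tan y ^ 2) * evenOp t f y) := by
        intro y hy
        rw [ih f hf y hy]
        ring
      have E2 : ∀ y ∈ S, deriv (deriv (Xf t f)) y
          = (2 * (t : ℝ) + 2) * ((1 + Real.tan y ^ 2) * Xf t f y)
            + (2 * (t : ℝ) + 2) * (Real.tan y * deriv (Xf t f) y)
            + (2 * (2 * (t : ℝ) + 1)) * (Real.tan y * ((1 + Real.tan y ^ 2) * evenOp t f y))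
            + (2 * (t : ℝ) + 1) * ((1 + Real.tan y ^ 2) * deriv (evenOp t f) y) := by
        intro y hy
        have e := derivS_congr E1 hy
        rw [e]
        have H : HasDerivAt (fun z => (2 * (t : ℝ) + 2) * (Real.tan z * Xf t f z)
              + (2 * (t : ℝ) + 1) * ((1 + Real.tan z ^ 2) * evenOp t f z))
            ((2 * (t : ℝ) + 2) * ((1 + Real.tan y ^ 2) * Xf t f y
                + Real.tan y * deriv (Xf t f) y)
              + (2 * (t : ℝ) + 1) * ((2 * Real.tan y * (1 + Real.tan y ^ 2)) * evenOp t f y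
                + (1 + Real.tan y ^ 2) * deriv (evenOp t f) y)) y :=
          (((hasDerivAt_tan' hy).mul (hv.hasDerivAt hy)).const_mul _).add
            (((hasDerivAt_W hy).mul (hu.hasDerivAt hy)).const_mul _)
        rw [H.deriv]
        ring
      have E3 : deriv (deriv (deriv (Xf t f))) x
          = 2 * (2 * (t : ℝ) + 2) * Real.tan x * (1 + Real.tan x ^ 2) * Xf t f x
            + 2 * (2 * (t : ℝ) + 2) * (1 + Real.tan x ^ 2) * deriv (Xf t f) x
            + (2 * (t : ℝ) + 2) * Real.tan x * deriv (deriv (Xf t f)) x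
            + 2 * (2 * (t : ℝ) + 1) * (1 + Real.tan x ^ 2) * (1 + 3 * Real.tan x ^ 2)
                * evenOp t f x
            + 4 * (2 * (t : ℝ) + 1) * Real.tan x * (1 + Real.tan x ^ 2)
                * deriv (evenOp t f) x
            + (2 * (t : ℝ) + 1) * (1 + Real.tan x ^ 2) * deriv (deriv (evenOp t f)) x := by
        have e := derivS_congr E2 hx
        rw [e]
        have H : HasDerivAt (fun z => (2 * (t : ℝ) + 2) * ((1 + Real.tan z ^ 2) * Xf t f z)
              + (2 * (t : ℝ) + 2) * (Real.tan z * deriv (Xf t f) z)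
              + (2 * (2 * (t : ℝ) + 1)) * (Real.tan z * ((1 + Real.tan z ^ 2) * evenOp t f z))
              + (2 * (t : ℝ) + 1) * ((1 + Real.tan z ^ 2) * deriv (evenOp t f) z))
            ((2 * (t : ℝ) + 2) * ((2 * Real.tan x * (1 + Real.tan x ^ 2)) * Xf t f x
                + (1 + Real.tan x ^ 2) * deriv (Xf t f) x)
              + (2 * (t : ℝ) + 2) * ((1 + Real.tan x ^ 2) * deriv (Xf t f) x
                + Real.tan x * deriv (deriv (Xf t f)) x)
              + (2 * (2 * (t : ℝ) + 1)) * ((1 + Real.tan x ^ 2)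
                  * ((1 + Real.tan x ^ 2) * evenOp t f x)
                + Real.tan x * ((2 * Real.tan x * (1 + Real.tan x ^ 2)) * evenOp t f x
                  + (1 + Real.tan x ^ 2) * deriv (evenOp t f) x))
              + (2 * (t : ℝ) + 1) * ((2 * Real.tan x * (1 + Real.tan x ^ 2))
                  * deriv (evenOp t f) x
                + (1 + Real.tan x ^ 2) * deriv (deriv (evenOp t f)) x)) x :=
          (((((hasDerivAt_W hx).mul (hv.hasDerivAt hx)).const_mul _).add
            (((hasDerivAt_tan' hx).mul ((hv.deriv).hasDerivAt hx)).const_mul _)).add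
            (((hasDerivAt_tan' hx).mul
              ((hasDerivAt_W hx).mul (hu.hasDerivAt hx))).const_mul _)).add
            (((hasDerivAt_W hx).mul ((hu.deriv).hasDerivAt hx)).const_mul _)
        rw [H.deriv]
        ring
      have P0 : evenOp t (Tm f) = fun θ => Real.tan θ * evenOp t f θ + Xf t f θ := by
        funext θ
        simp only [Xf]
        ring
      have P1 : ∀ y ∈ S, deriv (fun θ => Real.tan θ * evenOp t f θ + Xf t f θ) y
          = ((1 + Real.tan y ^ 2) * evenOp t f y + Real.tan y * deriv (evenOp t f) y)
            + deriv (Xf t f) y := by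
        intro y hy
        exact (((hasDerivAt_tan' hy).mul (hu.hasDerivAt hy)).add (hv.hasDerivAt hy)).deriv
      have P2 : ∀ y ∈ S, deriv (deriv (fun θ => Real.tan θ * evenOp t f θ + Xf t f θ)) y
          = 2 * Real.tan y * (1 + Real.tan y ^ 2) * evenOp t f y
            + 2 * ((1 + Real.tan y ^ 2) * deriv (evenOp t f) y)
            + Real.tan y * deriv (deriv (evenOp t f)) y
            + deriv (deriv (Xf t f)) y := by
        intro y hy
        have e := derivS_congr P1 hy
        rw [e]
        have H : HasDerivAt (fun z => ((1 + Real.tan z ^ 2) * evenOp t f z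
              + Real.tan z * deriv (evenOp t f) z) + deriv (Xf t f) z)
            ((((2 * Real.tan y * (1 + Real.tan y ^ 2)) * evenOp t f y
                + (1 + Real.tan y ^ 2) * deriv (evenOp t f) y)
              + ((1 + Real.tan y ^ 2) * deriv (evenOp t f) y
                + Real.tan y * deriv (deriv (evenOp t f)) y))
              + deriv (deriv (Xf t f)) y) y :=
          ((((hasDerivAt_W hy).mul (hu.hasDerivAt hy)).add
            ((hasDerivAt_tan' hy).mul ((hu.deriv).hasDerivAt hy))).add
            (((hv.deriv).hasDerivAt hy)))
        rw [H.deriv]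
        ring
      have P3 : ∀ y ∈ S, Xf (t + 1) f y
          = 2 * (Real.tan y * ((1 + Real.tan y ^ 2) * evenOp t f y))
            + 2 * ((1 + Real.tan y ^ 2) * deriv (evenOp t f) y)
            + deriv (deriv (Xf t f)) y
            + ((2 * (t + 1) : ℕ) : ℝ) ^ 2 * Xf t f y := by
        intro y hy
        show evenOp (t + 1) (Tm f) y - Real.tan y * evenOp (t + 1) f y = _
        rw [evenOp_succ_apply, evenOp_succ_apply, P0, P2 y hy]
        ring
      have e := derivS_congr P3 hx
      have H4 : HasDerivAt (fun z => 2 * (Real.tan z * ((1 + Real.tan z ^ 2) * evenOp t f z))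
            + 2 * ((1 + Real.tan z ^ 2) * deriv (evenOp t f) z)
            + deriv (deriv (Xf t f)) z
            + ((2 * (t + 1) : ℕ) : ℝ) ^ 2 * Xf t f z)
          ((2 * ((1 + Real.tan x ^ 2) * ((1 + Real.tan x ^ 2) * evenOp t f x)
              + Real.tan x * ((2 * Real.tan x * (1 + Real.tan x ^ 2)) * evenOp t f x
                + (1 + Real.tan x ^ 2) * deriv (evenOp t f) x))
            + 2 * ((2 * Real.tan x * (1 + Real.tan x ^ 2)) * deriv (evenOp t f) x
              + (1 + Real.tan x ^ 2) * deriv (deriv (evenOp t f)) x))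
            + deriv (deriv (deriv (Xf t f))) x
            + ((2 * (t + 1) : ℕ) : ℝ) ^ 2 * deriv (Xf t f) x) x :=
        (((((hasDerivAt_tan' hx).mul
              ((hasDerivAt_W hx).mul (hu.hasDerivAt hx))).const_mul _).add
          (((hasDerivAt_W hx).mul ((hu.deriv).hasDerivAt hx)).const_mul _)).add
          (((hv.deriv).deriv).hasDerivAt hx)).add
          ((hv.hasDerivAt hx).const_mul _)
      rw [e, H4.deriv, P3 x hx, evenOp_succ_apply, E3, E2 x hx, E1 x hx]
      push_cast
      ring

/-- Main auxiliary lemma: the product of the factors equals `evenOp t` on `S`. -/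
lemma main_aux (t : ℕ) : ∀ (f : ℝ → ℝ), Sm f → ∀ x ∈ S,
    prodFactorOp ((List.range (2 * t + 1)).map (fun i : ℕ => -((2 * t : ℕ) : ℤ) + 2 * (i : ℤ))) f x
      = evenOp t f x := by
  induction t with
  | zero =>
      intro f hf x hx
      show factorOp (-((2 * 0 : ℕ) : ℤ) + 2 * ((0 : ℕ) : ℤ)) f x = evenOp 0 f x
      show deriv f x + ((-((2 * 0 : ℕ) : ℤ) + 2 * ((0 : ℕ) : ℤ) : ℤ) : ℝ) * Real.tan x * f x
        = deriv f x
      push_cast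
      ring
  | succ t ih =>
      intro f hf x hx
      have hlist : (List.range (2 * (t + 1) + 1)).map
            (fun i : ℕ => -((2 * (t + 1) : ℕ) : ℤ) + 2 * (i : ℤ))
          = (-((2 * (t + 1) : ℕ) : ℤ)) ::
            (((List.range (2 * t + 1)).map (fun i : ℕ => -((2 * t : ℕ) : ℤ) + 2 * (i : ℤ)))
              ++ [((2 * (t + 1) : ℕ) : ℤ)]) := by
        have h1 : 2 * (t + 1) + 1 = (2 * t + 1 + 1) + 1 := by ring
        have A : List.map ((fun i : ℕ => -((2 * (t + 1) : ℕ) : ℤ) + 2 * (i : ℤ)) ∘ Nat.succ)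
              (List.range (2 * t + 1))
            = List.map (fun i : ℕ => -((2 * t : ℕ) : ℤ) + 2 * (i : ℤ))
              (List.range (2 * t + 1)) := by
          apply List.map_congr_left
          intro i _
          simp only [Function.comp_apply, Nat.succ_eq_add_one]
          push_cast
          ring
        have B : List.map ((fun i : ℕ => -((2 * (t + 1) : ℕ) : ℤ) + 2 * (i : ℤ)) ∘ Nat.succ)
              [2 * t + 1] = [((2 * (t + 1) : ℕ) : ℤ)] := by
          simp only [List.map_cons, List.map_nil, Function.comp_apply, Nat.succ_eq_add_one]
          congr 1
          push_cast
          ring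
        rw [h1, List.range_succ_eq_map, List.range_succ, List.map_cons, List.map_map,
          List.map_append, A, B]
        congr 1
      rw [hlist]
      have hsplit : prodFactorOp ((-((2 * (t + 1) : ℕ) : ℤ)) ::
            (((List.range (2 * t + 1)).map (fun i : ℕ => -((2 * t : ℕ) : ℤ) + 2 * (i : ℤ)))
              ++ [((2 * (t + 1) : ℕ) : ℤ)])) f
          = factorOp (-((2 * (t + 1) : ℕ) : ℤ))
            (prodFactorOp
              ((List.range (2 * t + 1)).map (fun i : ℕ => -((2 * t : ℕ) : ℤ) + 2 * (i : ℤ)))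
              (factorOp ((2 * (t + 1) : ℕ) : ℤ) f)) := by
        simp [prodFactorOp, List.foldr_append]
      rw [hsplit]
      have hg : Sm (factorOp ((2 * (t + 1) : ℕ) : ℤ) f) := hf.factorOp _
      have hu : Sm (evenOp t f) := hf.evenOp t
      have hv : Sm (Xf t f) := hf.xf t
      have hgfun : factorOp ((2 * (t + 1) : ℕ) : ℤ) f
          = fun θ => deriv f θ + (2 * (t : ℝ) + 2) * Tm f θ := by
        funext θ
        simp only [factorOp, Tm]
        push_cast
        ring
      have hAB : ∀ y ∈ S, prodFactorOp
            ((List.range (2 * t + 1)).map (fun i : ℕ => -((2 * t : ℕ) : ℤ) + 2 * (i : ℤ)))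
            (factorOp ((2 * (t + 1) : ℕ) : ℤ) f) y
          = deriv (evenOp t f) y + (2 * (t : ℝ) + 2) * (Real.tan y * evenOp t f y)
            + (2 * (t : ℝ) + 2) * Xf t f y := by
        intro y hy
        rw [ih (factorOp ((2 * (t + 1) : ℕ) : ℤ) f) hg y hy, hgfun,
          evenOp_lin t hf.deriv hf.tm (2 * (t : ℝ) + 2) y hy,
          evenOp_deriv_comm t hf y hy]
        have hX : evenOp t (Tm f) y = Real.tan y * evenOp t f y + Xf t f y := by
          simp only [Xf]; ring
        rw [hX]
        ring
      have e := derivS_congr hAB hx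
      have H5 : HasDerivAt (fun z => deriv (evenOp t f) z
            + (2 * (t : ℝ) + 2) * (Real.tan z * evenOp t f z)
            + (2 * (t : ℝ) + 2) * Xf t f z)
          (deriv (deriv (evenOp t f)) x
            + (2 * (t : ℝ) + 2) * ((1 + Real.tan x ^ 2) * evenOp t f x
              + Real.tan x * deriv (evenOp t f) x)
            + (2 * (t : ℝ) + 2) * deriv (Xf t f) x) x :=
        (((hu.deriv).hasDerivAt hx).add
          (((hasDerivAt_tan' hx).mul (hu.hasDerivAt hx)).const_mul _)).add
          ((hv.hasDerivAt hx).const_mul _)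
      show deriv (prodFactorOp
            ((List.range (2 * t + 1)).map (fun i : ℕ => -((2 * t : ℕ) : ℤ) + 2 * (i : ℤ)))
            (factorOp ((2 * (t + 1) : ℕ) : ℤ) f)) x
          + ((-((2 * (t + 1) : ℕ) : ℤ) : ℤ) : ℝ) * Real.tan x * prodFactorOp
            ((List.range (2 * t + 1)).map (fun i : ℕ => -((2 * t : ℕ) : ℤ) + 2 * (i : ℤ)))
            (factorOp ((2 * (t + 1) : ℕ) : ℤ) f) x
          = evenOp (t + 1) f x
      rw [e, H5.deriv, hAB x hx, evenOp_succ_apply, star t f hf x hx]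
      push_cast
      ring

end EvenProd

/-- For even `k = 2t ≥ 2`, the composition
`(∇ − kΥ)(∇ − (k−2)Υ)⋯(∇ + (k−2)Υ)(∇ + kΥ)` over even `j` from `−k` to `k`
(with `∇ + kΥ` innermost) equals `(∇² + k²)⋯(∇² + 4)∇`, as operators on smooth
functions on `(-π/2, π/2)`. -/
theorem even_product_identity (k t : ℕ) (hk : k = 2 * t) (hk2 : 2 ≤ k)
    (f : ℝ → ℝ) (hf : ContDiff ℝ (⊤ : ℕ∞) f)
    (θ : ℝ) (hθ : θ ∈ Set.Ioo (-(π / 2)) (π / 2)) :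
    prodFactorOp ((List.range (2 * t + 1)).map (fun i => -(k : ℤ) + 2 * i)) f θ
      = evenOp t f θ := by
  subst hk
  have hθS : θ ∈ EvenProd.S := (Real.cos_pos_of_mem_Ioo hθ).ne'
  have hf' : EvenProd.Sm f := fun n x _ => hf.contDiffAt.of_le (by exact_mod_cast le_top)
  have hconv : ((List.range (2 * t + 1)).map (fun i => -((2 * t : ℕ) : ℤ) + 2 * i))
      = ((List.range (2 * t + 1)).map (fun i : ℕ => -((2 * t : ℕ) : ℤ) + 2 * (i : ℤ))) := by
    have h : ((List.range (2 * t + 1)).flatMap fun a => ([((a : ℕ) : ℤ)]))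
        = (List.range (2 * t + 1)).map (fun a : ℕ => (a : ℤ)) :=
      List.flatMap_pure_eq_map (fun a : ℕ => (a : ℤ)) _
    show List.map _ ((List.range (2 * t + 1)).flatMap fun a => [((a : ℕ) : ℤ)]) = _
    rw [h, List.map_map]
    rfl
  rw [hconv]
  exact EvenProd.main_aux t f hf' θ hθS
end
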